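/- arXiv:2111.09835 — 2 statements merged into one kernel-verified Lean document; each statement's English description precedes it below -/
import Mathlib

section
/- Let H and K be Hilbert spaces and let {Tᵢ}_{i∈I} and {Lⱼ}_{j∈J} be operator frames on H and K with bounds (A, B) and (C, D) respectively. Then {Tᵢ ⊗ Lⱼ}_{(i,j)∈I×J} is an operator frame for the Hilbert space tensor product H ⊗ K with bounds (A·C, B·D). -/
set_option maxHeartbeats 2000000

open scoped InnerProductSpace ComplexConjugate ENNReal
open ContinuousLinearMap

section TensorFrameAux

variable {H : Type*} [NormedAddCommGroup H] [InnerProductSpace ℂ H] [CompleteSpace H]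
variable {K : Type*} [NormedAddCommGroup K] [InnerProductSpace ℂ K] [CompleteSpace K]
variable {E : Type*} [NormedAddCommGroup E] [InnerProductSpace ℂ E] [CompleteSpace E]
variable {I : Type*}

/-- Existence of the frame operator of an operator frame. -/
lemma frame_exists_op (T : I → H →L[ℂ] H) (B : ℝ) (hB : 0 ≤ B)
    (hsum : ∀ ξ : H, Summable fun i => ‖T i ξ‖ ^ 2)
    (hup : ∀ ξ : H, ∑' i, ‖T i ξ‖ ^ 2 ≤ B * ‖ξ‖ ^ 2) :
    ∃ S : H →L[ℂ] H, IsSelfAdjoint S ∧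
      ∀ ξ ξ' : H, HasSum (fun i => ⟪T i ξ, T i ξ'⟫_ℂ) ⟪ξ, S ξ'⟫_ℂ := by
  have hmem : ∀ ξ : H, Memℓp (fun i => T i ξ) 2 := by
    intro ξ
    apply memℓp_gen
    have h2 : (2 : ℝ≥0∞).toReal = 2 := by simp
    rw [h2]
    simpa [Real.rpow_natCast] using hsum ξ
  let Θ₀ : H →ₗ[ℂ] lp (fun _ : I => H) 2 :=
    { toFun := fun ξ => ⟨fun i => T i ξ, hmem ξ⟩
      map_add' := fun ξ ξ' => by
        apply Subtype.ext; funext i; simp; rfl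
      map_smul' := fun c ξ => by
        apply Subtype.ext; funext i; simp }
  have hΘ₀ : ∀ (ξ : H) (i : I), (Θ₀ ξ : ∀ _ : I, H) i = T i ξ := fun ξ i => rfl
  have hbound : ∀ ξ : H, ‖Θ₀ ξ‖ ≤ Real.sqrt B * ‖ξ‖ := by
    intro ξ
    have h2 : (0:ℝ) < (2 : ℝ≥0∞).toReal := by simp
    have hn := lp.norm_rpow_eq_tsum h2 (Θ₀ ξ)
    have hsq : ‖Θ₀ ξ‖ ^ (2:ℕ) = ∑' i, ‖T i ξ‖ ^ (2:ℕ) := by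
      simp only [ENNReal.toReal_ofNat] at hn
      rw [← Real.rpow_natCast (‖Θ₀ ξ‖) 2]
      push_cast
      rw [hn]
      congr 1
      funext i
      rw [hΘ₀ ξ i, ← Real.rpow_natCast (‖T i ξ‖) 2]
      norm_num
    have h1 : ‖Θ₀ ξ‖ ^ 2 ≤ (Real.sqrt B * ‖ξ‖) ^ 2 := by
      rw [hsq, mul_pow, Real.sq_sqrt hB]
      exact hup ξ
    calc ‖Θ₀ ξ‖ = Real.sqrt (‖Θ₀ ξ‖ ^ 2) := by rw [Real.sqrt_sq (norm_nonneg _)]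
      _ ≤ Real.sqrt ((Real.sqrt B * ‖ξ‖) ^ 2) := Real.sqrt_le_sqrt h1
      _ = Real.sqrt B * ‖ξ‖ := Real.sqrt_sq (by positivity)
  let Θ : H →L[ℂ] lp (fun _ : I => H) 2 := LinearMap.mkContinuous Θ₀ (Real.sqrt B) hbound
  have hΘ : ∀ (ξ : H) (i : I), (Θ ξ : ∀ _ : I, H) i = T i ξ := fun ξ i => rfl
  refine ⟨(ContinuousLinearMap.adjoint Θ) ∘L Θ, ?_, ?_⟩
  · rw [IsSelfAdjoint, ContinuousLinearMap.star_eq_adjoint, ContinuousLinearMap.adjoint_comp,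
      ContinuousLinearMap.adjoint_adjoint]
  · intro ξ ξ'
    have h1 : HasSum (fun i => ⟪(Θ ξ : ∀ _ : I, H) i, (Θ ξ' : ∀ _ : I, H) i⟫_ℂ) ⟪Θ ξ, Θ ξ'⟫_ℂ :=
      lp.hasSum_inner (Θ ξ) (Θ ξ')
    have h2 : ⟪Θ ξ, Θ ξ'⟫_ℂ = ⟪ξ, ((ContinuousLinearMap.adjoint Θ) ∘L Θ) ξ'⟫_ℂ := by
      rw [ContinuousLinearMap.comp_apply, ContinuousLinearMap.adjoint_inner_right]
    rw [← h2]
    convert h1 using 2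
    rfl

/-- Square root pairing for a positive operator. -/
lemma exists_sqrt_pairing {p : H →L[ℂ] H} (hp : p.IsPositive) :
    ∃ r : H →L[ℂ] H, ∀ ξ ξ' : H, ⟪r ξ, r ξ'⟫_ℂ = ⟪ξ, p ξ'⟫_ℂ := by
  have hp' : 0 ≤ p := (ContinuousLinearMap.nonneg_iff_isPositive p).mpr hp
  refine ⟨CFC.sqrt p, fun ξ ξ' => ?_⟩
  have h1 : (0:H →L[ℂ] H) ≤ CFC.sqrt p := CFC.sqrt_nonneg p
  have hsa : IsSelfAdjoint (CFC.sqrt p) :=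
    ((ContinuousLinearMap.nonneg_iff_isPositive _).mp h1).isSelfAdjoint
  have hsq : CFC.sqrt p * CFC.sqrt p = p := CFC.sqrt_mul_sqrt_self p hp'
  calc ⟪CFC.sqrt p ξ, CFC.sqrt p ξ'⟫_ℂ
      = ⟪(ContinuousLinearMap.adjoint (CFC.sqrt p)) ξ, CFC.sqrt p ξ'⟫_ℂ := by
        rw [hsa.adjoint_eq]
    _ = ⟪ξ, CFC.sqrt p (CFC.sqrt p ξ')⟫_ℂ := ContinuousLinearMap.adjoint_inner_left _ _ _
    _ = ⟪ξ, p ξ'⟫_ℂ := by rw [← ContinuousLinearMap.mul_apply, hsq]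

lemma inner_tmul_sum (tmul : H →ₗ[ℂ] K →ₗ[ℂ] E)
    (htmul : ∀ (ξ ξ' : H) (η η' : K),
      ⟪tmul ξ η, tmul ξ' η'⟫_ℂ = ⟪ξ, ξ'⟫_ℂ * ⟪η, η'⟫_ℂ)
    {ι : Type*} (u : Finset ι) (c : ι → ℂ) (x x' : ι → H) (y y' : ι → K) :
    ⟪∑ k ∈ u, c k • tmul (x k) (y k), ∑ l ∈ u, c l • tmul (x' l) (y' l)⟫_ℂ
      = ∑ k ∈ u, ∑ l ∈ u,
          (starRingEnd ℂ) (c k) * c l * (⟪x k, x' l⟫_ℂ * ⟪y k, y' l⟫_ℂ) := by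
  rw [sum_inner]
  refine Finset.sum_congr rfl fun k _ => ?_
  rw [inner_sum]
  refine Finset.sum_congr rfl fun l _ => ?_
  rw [inner_smul_left, inner_smul_right, htmul]
  ring

lemma Q_nonneg (tmul : H →ₗ[ℂ] K →ₗ[ℂ] E)
    (htmul : ∀ (ξ ξ' : H) (η η' : K),
      ⟪tmul ξ η, tmul ξ' η'⟫_ℂ = ⟪ξ, ξ'⟫_ℂ * ⟪η, η'⟫_ℂ)
    {ι : Type*} (u : Finset ι) (c : ι → ℂ) (x : ι → H) (y : ι → K)
    {p : H →L[ℂ] H} {q : K →L[ℂ] K} (hp : p.IsPositive) (hq : q.IsPositive) :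
    0 ≤ (∑ k ∈ u, ∑ l ∈ u,
        (starRingEnd ℂ) (c k) * c l * (⟪x k, p (x l)⟫_ℂ * ⟪y k, q (y l)⟫_ℂ)).re := by
  obtain ⟨r, hr⟩ := exists_sqrt_pairing hp
  obtain ⟨s, hs⟩ := exists_sqrt_pairing hq
  have key : ∑ k ∈ u, ∑ l ∈ u,
        (starRingEnd ℂ) (c k) * c l * (⟪x k, p (x l)⟫_ℂ * ⟪y k, q (y l)⟫_ℂ)
      = ⟪∑ k ∈ u, c k • tmul (r (x k)) (s (y k)),
          ∑ l ∈ u, c l • tmul (r (x l)) (s (y l))⟫_ℂ := by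
    rw [inner_tmul_sum tmul htmul u c (fun k => r (x k)) (fun k => r (x k))
      (fun k => s (y k)) (fun k => s (y k))]
    refine Finset.sum_congr rfl fun k _ => Finset.sum_congr rfl fun l _ => ?_
    rw [hr, hs]
  rw [key]
  simpa using inner_self_nonneg (𝕜 := ℂ)
    (x := ∑ k ∈ u, c k • tmul (r (x k)) (s (y k)))

lemma isPositive_aux {S : H →L[ℂ] H} (hsa : IsSelfAdjoint S)
    (h : ∀ ξ : H, 0 ≤ (⟪ξ, S ξ⟫_ℂ).re) : S.IsPositive := by
  refine ⟨ContinuousLinearMap.isSelfAdjoint_iff_isSymmetric.mp hsa, fun ξ => ?_⟩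
  rw [ContinuousLinearMap.reApplyInnerSelf_apply, inner_re_symm]
  simpa using h ξ

end TensorFrameAux

variable {H : Type*} [NormedAddCommGroup H] [InnerProductSpace ℂ H] [CompleteSpace H]

variable {K : Type*} [NormedAddCommGroup K] [InnerProductSpace ℂ K] [CompleteSpace K]
variable {E : Type*} [NormedAddCommGroup E] [InnerProductSpace ℂ E] [CompleteSpace E]
variable {I J : Type*} [Countable I] [Countable J]

/-- Tensor product of operator frames: stated via an abstract realization of the Hilbert
space tensor product `H ⊗ K`, namely a bilinear map `tmul` whose elementary tensors have
the correct inner products and total span dense in `E`. -/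
theorem tensor_frame (tmul : H →ₗ[ℂ] K →ₗ[ℂ] E)
    (htmul : ∀ (ξ ξ' : H) (η η' : K),
      ⟪tmul ξ η, tmul ξ' η'⟫_ℂ = ⟪ξ, ξ'⟫_ℂ * ⟪η, η'⟫_ℂ)
    (hdense :
      Dense (Submodule.span ℂ (Set.range fun p : H × K => tmul p.1 p.2) : Set E))
    (T : I → H →L[ℂ] H) (L : J → K →L[ℂ] K) (A B C D : ℝ)
    (hA : 0 < A) (hB : 0 < B) (hC : 0 < C) (hD : 0 < D)
    (hsumT : ∀ ξ : H, Summable fun i => ‖T i ξ‖ ^ 2)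
    (hlowT : ∀ ξ : H, A * ‖ξ‖ ^ 2 ≤ ∑' i, ‖T i ξ‖ ^ 2)
    (hupT : ∀ ξ : H, ∑' i, ‖T i ξ‖ ^ 2 ≤ B * ‖ξ‖ ^ 2)
    (hsumL : ∀ η : K, Summable fun j => ‖L j η‖ ^ 2)
    (hlowL : ∀ η : K, C * ‖η‖ ^ 2 ≤ ∑' j, ‖L j η‖ ^ 2)
    (hupL : ∀ η : K, ∑' j, ‖L j η‖ ^ 2 ≤ D * ‖η‖ ^ 2)
    (M : I × J → E →L[ℂ] E)
    (hM : ∀ (i : I) (j : J) (ξ : H) (η : K),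
      M (i, j) (tmul ξ η) = tmul (T i ξ) (L j η)) :
    ∀ z : E, (Summable fun p : I × J => ‖M p z‖ ^ 2) ∧
      A * C * ‖z‖ ^ 2 ≤ ∑' p : I × J, ‖M p z‖ ^ 2 ∧
        ∑' p : I × J, ‖M p z‖ ^ 2 ≤ B * D * ‖z‖ ^ 2 := by
  classical
  obtain ⟨ST, hSTsa, hST⟩ := frame_exists_op T B hB.le hsumT hupT
  obtain ⟨SL, hSLsa, hSL⟩ := frame_exists_op L D hD.le hsumL hupL
  have hnormsq : ∀ w : H, ‖w‖ ^ 2 = (⟪w, w⟫_ℂ).re := fun w => by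
    simpa using (inner_self_eq_norm_sq (𝕜 := ℂ) w).symm
  have hnormsqK : ∀ w : K, ‖w‖ ^ 2 = (⟪w, w⟫_ℂ).re := fun w => by
    simpa using (inner_self_eq_norm_sq (𝕜 := ℂ) w).symm
  have hnormsqE : ∀ w : E, ‖w‖ ^ 2 = (⟪w, w⟫_ℂ).re := fun w => by
    simpa using (inner_self_eq_norm_sq (𝕜 := ℂ) w).symm
  -- diagonal values of the frame operators
  have hSTdiag : ∀ ξ : H, ⟪ξ, ST ξ⟫_ℂ = ((∑' i, ‖T i ξ‖ ^ 2 : ℝ) : ℂ) := by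
    intro ξ
    refine (hST ξ ξ).unique ?_
    have h3 := (hsumT ξ).hasSum.mapL Complex.ofRealCLM
    convert h3 using 2 with i
    rw [inner_self_eq_norm_sq_to_K]
    push_cast
    simp
    exact (Complex.ofRealCLM_apply _).symm
  have hSLdiag : ∀ η : K, ⟪η, SL η⟫_ℂ = ((∑' j, ‖L j η‖ ^ 2 : ℝ) : ℂ) := by
    intro η
    refine (hSL η η).unique ?_
    have h3 := (hsumL η).hasSum.mapL Complex.ofRealCLM
    convert h3 using 2 with j
    rw [inner_self_eq_norm_sq_to_K]
    push_cast
    simp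
    exact (Complex.ofRealCLM_apply _).symm
  -- positivity facts
  have hsmul_diag : ∀ (r : ℝ) (S : H →L[ℂ] H) (ξ : H),
      (⟪ξ, (S - r • 1) ξ⟫_ℂ).re = (⟪ξ, S ξ⟫_ℂ).re - r * ‖ξ‖ ^ 2 := by
    intro r S ξ
    rw [ContinuousLinearMap.sub_apply, inner_sub_right]
    simp only [Complex.sub_re]
    congr 1
    rw [ContinuousLinearMap.smul_apply, ContinuousLinearMap.one_apply, RCLike.real_smul_eq_coe_smul (K := ℂ), inner_smul_real_right]
    rw [hnormsq ξ]
    simp [Complex.smul_re]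
  have hsmul_diagK : ∀ (r : ℝ) (S : K →L[ℂ] K) (η : K),
      (⟪η, (S - r • 1) η⟫_ℂ).re = (⟪η, S η⟫_ℂ).re - r * ‖η‖ ^ 2 := by
    intro r S η
    rw [ContinuousLinearMap.sub_apply, inner_sub_right]
    simp only [Complex.sub_re]
    congr 1
    rw [ContinuousLinearMap.smul_apply, ContinuousLinearMap.one_apply, RCLike.real_smul_eq_coe_smul (K := ℂ), inner_smul_real_right]
    rw [hnormsqK η]
    simp [Complex.smul_re]
  have hsmul_sa : ∀ r : ℝ, IsSelfAdjoint (r • (1 : H →L[ℂ] H)) := fun r => by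
    rw [IsSelfAdjoint, star_smul, star_trivial, star_one]
  have hsmul_saK : ∀ r : ℝ, IsSelfAdjoint (r • (1 : K →L[ℂ] K)) := fun r => by
    rw [IsSelfAdjoint, star_smul, star_trivial, star_one]
  have hSTlow : (ST - A • 1).IsPositive := by
    refine isPositive_aux (hSTsa.sub (hsmul_sa A)) fun ξ => ?_
    rw [hsmul_diag A ST ξ, hSTdiag ξ]
    simp only [Complex.ofReal_re]
    linarith [hlowT ξ]
  have hSTup : ((B : ℝ) • (1 : H →L[ℂ] H) - ST).IsPositive := by
    refine isPositive_aux ((hsmul_sa B).sub hSTsa) fun ξ => ?_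
    have : (⟪ξ, (B • (1:H →L[ℂ] H) - ST) ξ⟫_ℂ).re = -((⟪ξ, (ST - B • 1) ξ⟫_ℂ).re) := by
      rw [show B • (1:H →L[ℂ] H) - ST = -(ST - B • 1) by abel]
      simp [inner_sub_right, Complex.sub_re]
    rw [this, hsmul_diag B ST ξ, hSTdiag ξ]
    simp only [Complex.ofReal_re]
    linarith [hupT ξ]
  have hSLpos : SL.IsPositive := by
    refine isPositive_aux hSLsa fun η => ?_
    rw [hSLdiag η]
    simp only [Complex.ofReal_re]
    exact tsum_nonneg fun j => by positivity
  have hSLlow : (SL - C • 1).IsPositive := by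
    refine isPositive_aux (hSLsa.sub (hsmul_saK C)) fun η => ?_
    rw [hsmul_diagK C SL η, hSLdiag η]
    simp only [Complex.ofReal_re]
    linarith [hlowL η]
  have hSLup : ((D : ℝ) • (1 : K →L[ℂ] K) - SL).IsPositive := by
    refine isPositive_aux ((hsmul_saK D).sub hSLsa) fun η => ?_
    have : (⟪η, (D • (1:K →L[ℂ] K) - SL) η⟫_ℂ).re = -((⟪η, (SL - D • 1) η⟫_ℂ).re) := by
      rw [show D • (1:K →L[ℂ] K) - SL = -(SL - D • 1) by abel]
      simp [inner_sub_right, Complex.sub_re]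
    rw [this, hsmul_diagK D SL η, hSLdiag η]
    simp only [Complex.ofReal_re]
    linarith [hupL η]
  -- splitting lemmas for inner products
  have hsplitTlow : ∀ ξ ξ' : H, ⟪ξ, ST ξ'⟫_ℂ = (A : ℂ) * ⟪ξ, ξ'⟫_ℂ + ⟪ξ, (ST - A • 1) ξ'⟫_ℂ := by
    intro ξ ξ'
    rw [ContinuousLinearMap.sub_apply, inner_sub_right, ContinuousLinearMap.smul_apply,
      ContinuousLinearMap.one_apply, RCLike.real_smul_eq_coe_smul (K := ℂ), inner_smul_real_right]
    rw [Complex.real_smul]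
    ring
  have hsplitTup : ∀ ξ ξ' : H, ⟪ξ, ST ξ'⟫_ℂ = (B : ℂ) * ⟪ξ, ξ'⟫_ℂ - ⟪ξ, ((B:ℝ) • 1 - ST) ξ'⟫_ℂ := by
    intro ξ ξ'
    rw [ContinuousLinearMap.sub_apply, inner_sub_right, ContinuousLinearMap.smul_apply,
      ContinuousLinearMap.one_apply, RCLike.real_smul_eq_coe_smul (K := ℂ), inner_smul_real_right]
    rw [Complex.real_smul]
    ring
  have hsplitLlow : ∀ η η' : K, ⟪η, SL η'⟫_ℂ = (C : ℂ) * ⟪η, η'⟫_ℂ + ⟪η, (SL - C • 1) η'⟫_ℂ := by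
    intro η η'
    rw [ContinuousLinearMap.sub_apply, inner_sub_right, ContinuousLinearMap.smul_apply,
      ContinuousLinearMap.one_apply, RCLike.real_smul_eq_coe_smul (K := ℂ), inner_smul_real_right]
    rw [Complex.real_smul]
    ring
  have hsplitLup : ∀ η η' : K, ⟪η, SL η'⟫_ℂ = (D : ℂ) * ⟪η, η'⟫_ℂ - ⟪η, ((D:ℝ) • 1 - SL) η'⟫_ℂ := by
    intro η η'
    rw [ContinuousLinearMap.sub_apply, inner_sub_right, ContinuousLinearMap.smul_apply,
      ContinuousLinearMap.one_apply, RCLike.real_smul_eq_coe_smul (K := ℂ), inner_smul_real_right]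
    rw [Complex.real_smul]
    ring
  -- span step
  have hspan : ∀ z ∈ Submodule.span ℂ (Set.range fun p : H × K => tmul p.1 p.2),
      (Summable fun p : I × J => ‖M p z‖ ^ 2) ∧
        A * C * ‖z‖ ^ 2 ≤ ∑' p : I × J, ‖M p z‖ ^ 2 ∧
          ∑' p : I × J, ‖M p z‖ ^ 2 ≤ B * D * ‖z‖ ^ 2 := by
    intro z hz
    rw [Finsupp.mem_span_range_iff_exists_finsupp] at hz
    obtain ⟨cc, hrep⟩ := hz
    set u : Finset (H × K) := cc.support with hu
    have hzrep : z = ∑ k ∈ u, cc k • tmul k.1 k.2 := by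
      rw [← hrep, Finsupp.sum]
    have hMz : ∀ p : I × J, M p z = ∑ k ∈ u, cc k • tmul (T p.1 k.1) (L p.2 k.2) := by
      intro p
      obtain ⟨i, j⟩ := p
      rw [hzrep, map_sum]
      refine Finset.sum_congr rfl fun k _ => ?_
      rw [map_smul, hM i j k.1 k.2]
    have hTnorm : ∀ ξ ξ' : H, Summable fun i => ‖(⟪T i ξ, T i ξ'⟫_ℂ)‖ := by
      intro ξ ξ'
      refine Summable.of_nonneg_of_le (fun i => norm_nonneg _) (fun i => ?_)
        (((hsumT ξ).add (hsumT ξ')).div_const 2)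
      calc ‖⟪T i ξ, T i ξ'⟫_ℂ‖ ≤ ‖T i ξ‖ * ‖T i ξ'‖ := norm_inner_le_norm _ _
        _ ≤ (‖T i ξ‖ ^ 2 + ‖T i ξ'‖ ^ 2) / 2 := by nlinarith [sq_nonneg (‖T i ξ‖ - ‖T i ξ'‖)]
    have hLnorm : ∀ η η' : K, Summable fun j => ‖(⟪L j η, L j η'⟫_ℂ)‖ := by
      intro η η'
      refine Summable.of_nonneg_of_le (fun j => norm_nonneg _) (fun j => ?_)
        (((hsumL η).add (hsumL η')).div_const 2)
      calc ‖⟪L j η, L j η'⟫_ℂ‖ ≤ ‖L j η‖ * ‖L j η'‖ := norm_inner_le_norm _ _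
        _ ≤ (‖L j η‖ ^ 2 + ‖L j η'‖ ^ 2) / 2 := by nlinarith [sq_nonneg (‖L j η‖ - ‖L j η'‖)]
    have hG : ∀ p : I × J, ⟪M p z, M p z⟫_ℂ = ∑ k ∈ u, ∑ l ∈ u,
        (starRingEnd ℂ) (cc k) * cc l *
          (⟪T p.1 k.1, T p.1 l.1⟫_ℂ * ⟪L p.2 k.2, L p.2 l.2⟫_ℂ) := by
      intro p
      rw [hMz p]
      exact inner_tmul_sum tmul htmul u cc (fun k => T p.1 k.1) (fun k => T p.1 k.1)
        (fun k => L p.2 k.2) (fun k => L p.2 k.2)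
    have hHasSumG : HasSum (fun p : I × J => ∑ k ∈ u, ∑ l ∈ u,
          (starRingEnd ℂ) (cc k) * cc l *
            (⟪T p.1 k.1, T p.1 l.1⟫_ℂ * ⟪L p.2 k.2, L p.2 l.2⟫_ℂ))
        (∑ k ∈ u, ∑ l ∈ u, (starRingEnd ℂ) (cc k) * cc l *
          (⟪k.1, ST l.1⟫_ℂ * ⟪k.2, SL l.2⟫_ℂ)) := by
      refine hasSum_sum fun k _ => hasSum_sum fun l _ => ?_
      have habs : Summable fun p : I × J =>
          ⟪T p.1 k.1, T p.1 l.1⟫_ℂ * ⟪L p.2 k.2, L p.2 l.2⟫_ℂ := by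
        apply Summable.of_norm
        simp only [norm_mul]
        exact Summable.mul_of_nonneg (hTnorm k.1 l.1) (hLnorm k.2 l.2)
          (fun i => norm_nonneg _) (fun j => norm_nonneg _)
      exact ((hST k.1 l.1).mul (hSL k.2 l.2) habs).mul_left _
    have hHasSumF : HasSum (fun p : I × J => ‖M p z‖ ^ 2)
        (∑ k ∈ u, ∑ l ∈ u, (starRingEnd ℂ) (cc k) * cc l *
          (⟪k.1, ST l.1⟫_ℂ * ⟪k.2, SL l.2⟫_ℂ)).re := by
      have h2 := hHasSumG.mapL Complex.reCLM
      convert h2 using 2 with p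
      rw [hnormsqE (M p z), hG p]
      simp
      exact (Complex.reCLM_apply _).symm
    have hQ11 : ⟪z, z⟫_ℂ = ∑ k ∈ u, ∑ l ∈ u,
        (starRingEnd ℂ) (cc k) * cc l * (⟪k.1, l.1⟫_ℂ * ⟪k.2, l.2⟫_ℂ) := by
      rw [hzrep]
      exact inner_tmul_sum tmul htmul u cc (fun k => k.1) (fun k => k.1)
        (fun k => k.2) (fun k => k.2)
    refine ⟨hHasSumF.summable, ?_, ?_⟩
    · -- lower bound on the span
      rw [hHasSumF.tsum_eq]
      have hdecomp : (∑ k ∈ u, ∑ l ∈ u, (starRingEnd ℂ) (cc k) * cc l *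
            (⟪k.1, ST l.1⟫_ℂ * ⟪k.2, SL l.2⟫_ℂ))
          = ((A * C : ℝ) : ℂ) * ⟪z, z⟫_ℂ
            + (((A : ℝ) : ℂ) * ∑ k ∈ u, ∑ l ∈ u, (starRingEnd ℂ) (cc k) * cc l *
                (⟪k.1, l.1⟫_ℂ * ⟪k.2, (SL - C • 1) l.2⟫_ℂ)
              + ∑ k ∈ u, ∑ l ∈ u, (starRingEnd ℂ) (cc k) * cc l *
                (⟪k.1, (ST - A • 1) l.1⟫_ℂ * ⟪k.2, SL l.2⟫_ℂ)) := by
        rw [hQ11]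
        simp only [Finset.mul_sum, ← Finset.sum_add_distrib]
        refine Finset.sum_congr rfl fun k _ => Finset.sum_congr rfl fun l _ => ?_
        rw [hsplitTlow k.1 l.1, hsplitLlow k.2 l.2]
        push_cast
        ring
      have hre := congrArg Complex.re hdecomp
      rw [Complex.add_re, Complex.add_re, Complex.re_ofReal_mul, Complex.re_ofReal_mul] at hre
      have h1 : 0 ≤ (∑ k ∈ u, ∑ l ∈ u, (starRingEnd ℂ) (cc k) * cc l *
          (⟪k.1, l.1⟫_ℂ * ⟪k.2, (SL - C • 1) l.2⟫_ℂ)).re := by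
        have h1' := Q_nonneg tmul htmul u cc (fun k => k.1) (fun k => k.2)
          (isPositive_one (E := H) (𝕜 := ℂ)) hSLlow
        simpa using h1'
      have h2 : 0 ≤ (∑ k ∈ u, ∑ l ∈ u, (starRingEnd ℂ) (cc k) * cc l *
          (⟪k.1, (ST - A • 1) l.1⟫_ℂ * ⟪k.2, SL l.2⟫_ℂ)).re :=
        Q_nonneg tmul htmul u cc (fun k => k.1) (fun k => k.2) hSTlow hSLpos
      rw [hnormsqE z]
      have hApos := mul_nonneg hA.le h1
      linarith
    · -- upper bound on the span
      rw [hHasSumF.tsum_eq]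
      have hdecomp : ((B * D : ℝ) : ℂ) * ⟪z, z⟫_ℂ
          = (∑ k ∈ u, ∑ l ∈ u, (starRingEnd ℂ) (cc k) * cc l *
              (⟪k.1, ST l.1⟫_ℂ * ⟪k.2, SL l.2⟫_ℂ))
            + (((B : ℝ) : ℂ) * ∑ k ∈ u, ∑ l ∈ u, (starRingEnd ℂ) (cc k) * cc l *
                (⟪k.1, l.1⟫_ℂ * ⟪k.2, ((D : ℝ) • 1 - SL) l.2⟫_ℂ)
              + ∑ k ∈ u, ∑ l ∈ u, (starRingEnd ℂ) (cc k) * cc l *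
                (⟪k.1, ((B : ℝ) • 1 - ST) l.1⟫_ℂ * ⟪k.2, SL l.2⟫_ℂ)) := by
        rw [hQ11]
        simp only [Finset.mul_sum, ← Finset.sum_add_distrib]
        refine Finset.sum_congr rfl fun k _ => Finset.sum_congr rfl fun l _ => ?_
        rw [hsplitTup k.1 l.1, hsplitLup k.2 l.2]
        push_cast
        ring
      have hre := congrArg Complex.re hdecomp
      rw [Complex.re_ofReal_mul, Complex.add_re, Complex.add_re, Complex.re_ofReal_mul] at hre
      have h1 : 0 ≤ (∑ k ∈ u, ∑ l ∈ u, (starRingEnd ℂ) (cc k) * cc l *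
          (⟪k.1, l.1⟫_ℂ * ⟪k.2, ((D : ℝ) • 1 - SL) l.2⟫_ℂ)).re := by
        have h1' := Q_nonneg tmul htmul u cc (fun k => k.1) (fun k => k.2)
          (isPositive_one (E := H) (𝕜 := ℂ)) hSLup
        simpa using h1'
      have h2 : 0 ≤ (∑ k ∈ u, ∑ l ∈ u, (starRingEnd ℂ) (cc k) * cc l *
          (⟪k.1, ((B : ℝ) • 1 - ST) l.1⟫_ℂ * ⟪k.2, SL l.2⟫_ℂ)).re :=
        Q_nonneg tmul htmul u cc (fun k => k.1) (fun k => k.2) hSTup hSLpos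
      rw [hnormsqE z]
      have hBpos := mul_nonneg hB.le h1
      linarith
  -- everything is in the closure of the span
  have hVdense : ∀ z : E,
      z ∈ closure (Submodule.span ℂ (Set.range fun p : H × K => tmul p.1 p.2) : Set E) := by
    intro z
    rw [hdense.closure_eq]
    trivial
  -- global upper bound for finite sums
  have hup_fin : ∀ (z : E) (s : Finset (I × J)),
      ∑ p ∈ s, ‖M p z‖ ^ 2 ≤ B * D * ‖z‖ ^ 2 := by
    intro z s
    have hsub : (Submodule.span ℂ (Set.range fun p : H × K => tmul p.1 p.2) : Set E)
        ⊆ {w : E | ∑ p ∈ s, ‖M p w‖ ^ 2 ≤ B * D * ‖w‖ ^ 2} := by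
      intro w hw
      obtain ⟨hsw, -, hupw⟩ := hspan w hw
      exact le_trans (hsw.sum_le_tsum s (fun p _ => by positivity)) hupw
    have hcl : IsClosed {w : E | ∑ p ∈ s, ‖M p w‖ ^ 2 ≤ B * D * ‖w‖ ^ 2} :=
      isClosed_le (continuous_finset_sum s fun p _ => ((M p).continuous.norm.pow 2))
        (continuous_const.mul (continuous_norm.pow 2))
    exact closure_minimal hsub hcl (hVdense z)
  have hsummable : ∀ z : E, Summable fun p : I × J => ‖M p z‖ ^ 2 := by
    intro z
    exact summable_of_sum_le (fun p => by positivity) (fun s => hup_fin z s)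
  have hupper : ∀ z : E, ∑' p : I × J, ‖M p z‖ ^ 2 ≤ B * D * ‖z‖ ^ 2 := fun z =>
    Summable.tsum_le_of_sum_le (hsummable z) (hup_fin z)
  -- finite Minkowski inequality
  have hmink : ∀ (z z' : E) (s : Finset (I × J)),
      Real.sqrt (∑ p ∈ s, ‖M p z'‖ ^ 2) ≤
        Real.sqrt (∑ p ∈ s, ‖M p z‖ ^ 2) + Real.sqrt (∑ p ∈ s, ‖M p (z' - z)‖ ^ 2) := by
    intro z z' s
    set uu : EuclideanSpace ℝ s := WithLp.toLp 2 (fun p => ‖M (p : I × J) z‖) with huu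
    set vv : EuclideanSpace ℝ s := WithLp.toLp 2 (fun p => ‖M (p : I × J) (z' - z)‖) with hvv
    have keynorm : ∀ (vec : EuclideanSpace ℝ s) (w : E),
        (∀ p : s, vec p = ‖M (p : I × J) w‖) →
        ‖vec‖ = Real.sqrt (∑ p ∈ s, ‖M p w‖ ^ 2) := by
      intro vec w hvec
      rw [EuclideanSpace.norm_eq vec]
      congr 1
      rw [← Finset.sum_coe_sort s (fun p => ‖M p w‖ ^ 2)]
      refine Finset.sum_congr rfl fun p _ => ?_
      rw [hvec p, Real.norm_eq_abs, sq_abs]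
    have hpt : ∀ p ∈ s, ‖M p z'‖ ^ 2 ≤ (‖M p z‖ + ‖M p (z' - z)‖) ^ 2 := by
      intro p _
      have hz'eq : M p z' = M p z + M p (z' - z) := by
        rw [← map_add]
        congr 1
        abel
      rw [hz'eq]
      exact pow_le_pow_left₀ (norm_nonneg _) (norm_add_le _ _) 2
    have hmid : ‖uu + vv‖ = Real.sqrt (∑ p ∈ s, (‖M p z‖ + ‖M p (z' - z)‖) ^ 2) := by
      rw [EuclideanSpace.norm_eq (uu + vv)]
      congr 1
      rw [← Finset.sum_coe_sort s (fun p => (‖M p z‖ + ‖M p (z' - z)‖) ^ 2)]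
      refine Finset.sum_congr rfl fun p _ => ?_
      have happly : (uu + vv) p = uu p + vv p := rfl
      rw [happly, huu, hvv, Real.norm_eq_abs, sq_abs]
    calc Real.sqrt (∑ p ∈ s, ‖M p z'‖ ^ 2)
        ≤ Real.sqrt (∑ p ∈ s, (‖M p z‖ + ‖M p (z' - z)‖) ^ 2) :=
          Real.sqrt_le_sqrt (Finset.sum_le_sum hpt)
      _ = ‖uu + vv‖ := hmid.symm
      _ ≤ ‖uu‖ + ‖vv‖ := norm_add_le _ _
      _ = Real.sqrt (∑ p ∈ s, ‖M p z‖ ^ 2) + Real.sqrt (∑ p ∈ s, ‖M p (z' - z)‖ ^ 2) := by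
          rw [keynorm uu z (fun p => by rw [huu]), keynorm vv (z' - z) (fun p => by rw [hvv])]
  -- one-sided Lipschitz bound for the square-root of the frame sums
  have hlip : ∀ z z' : E, Real.sqrt (∑' p : I × J, ‖M p z'‖ ^ 2) ≤
      Real.sqrt (∑' p : I × J, ‖M p z‖ ^ 2) + Real.sqrt (B * D) * ‖z' - z‖ := by
    intro z z'
    refine le_of_tendsto ((Real.continuous_sqrt.tendsto _).comp (hsummable z').hasSum)
      (Filter.Eventually.of_forall fun s => ?_)
    have h1 : Real.sqrt (∑ p ∈ s, ‖M p z‖ ^ 2) ≤ Real.sqrt (∑' p : I × J, ‖M p z‖ ^ 2) :=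
      Real.sqrt_le_sqrt ((hsummable z).sum_le_tsum s (fun p _ => by positivity))
    have h2 : Real.sqrt (∑ p ∈ s, ‖M p (z' - z)‖ ^ 2) ≤ Real.sqrt (B * D) * ‖z' - z‖ := by
      calc Real.sqrt (∑ p ∈ s, ‖M p (z' - z)‖ ^ 2)
          ≤ Real.sqrt (B * D * ‖z' - z‖ ^ 2) := Real.sqrt_le_sqrt (hup_fin (z' - z) s)
        _ = Real.sqrt (B * D) * ‖z' - z‖ := by
            rw [Real.sqrt_mul (by positivity), Real.sqrt_sq (norm_nonneg _)]
    have h3 := hmink z z' s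
    simp only [Function.comp_apply]
    linarith
  -- global lower bound
  have hlower : ∀ z : E, A * C * ‖z‖ ^ 2 ≤ ∑' p : I × J, ‖M p z‖ ^ 2 := by
    intro z
    have hκ : (0:ℝ) < Real.sqrt (A * C) + Real.sqrt (B * D) := by
      have h1 : (0:ℝ) < Real.sqrt (A * C) := Real.sqrt_pos.mpr (by positivity)
      have h2 : (0:ℝ) ≤ Real.sqrt (B * D) := Real.sqrt_nonneg _
      linarith
    have hkey : Real.sqrt (A * C) * ‖z‖ ≤ Real.sqrt (∑' p : I × J, ‖M p z‖ ^ 2) := by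
      refine le_of_forall_pos_le_add fun ε hε => ?_
      set δ := ε / (Real.sqrt (A * C) + Real.sqrt (B * D)) with hδ
      have hδpos : 0 < δ := div_pos hε hκ
      obtain ⟨z', hz'mem, hz'dist⟩ := Metric.mem_closure_iff.mp (hVdense z) δ hδpos
      obtain ⟨hs', hlow', -⟩ := hspan z' hz'mem
      have h1 : Real.sqrt (A * C) * ‖z'‖ ≤ Real.sqrt (∑' p : I × J, ‖M p z'‖ ^ 2) := by
        have h2 : Real.sqrt (A * C * ‖z'‖ ^ 2) ≤ Real.sqrt (∑' p : I × J, ‖M p z'‖ ^ 2) :=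
          Real.sqrt_le_sqrt hlow'
        rwa [Real.sqrt_mul (by positivity), Real.sqrt_sq (norm_nonneg _)] at h2
      have h3 := hlip z z'
      rw [dist_eq_norm] at hz'dist
      have h4 : ‖z' - z‖ ≤ δ := by
        rw [norm_sub_rev]
        linarith
      have h5 : ‖z‖ ≤ ‖z'‖ + δ := by
        have h6 := norm_sub_norm_le z z'
        linarith
      have h6 : Real.sqrt (A * C) * ‖z‖ ≤ Real.sqrt (A * C) * ‖z'‖ + Real.sqrt (A * C) * δ := by
        nlinarith [Real.sqrt_nonneg (A * C)]
      have h7 : Real.sqrt (B * D) * ‖z' - z‖ ≤ Real.sqrt (B * D) * δ :=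
        mul_le_mul_of_nonneg_left h4 (Real.sqrt_nonneg _)
      have h8 : (Real.sqrt (A * C) + Real.sqrt (B * D)) * δ = ε := by
        rw [hδ]
        field_simp
      nlinarith
    have h9 : (Real.sqrt (A * C) * ‖z‖) ^ 2 ≤ Real.sqrt (∑' p : I × J, ‖M p z‖ ^ 2) ^ 2 :=
      pow_le_pow_left₀ (by positivity) hkey 2
    have h10 : Real.sqrt (∑' p : I × J, ‖M p z‖ ^ 2) ^ 2 = ∑' p : I × J, ‖M p z‖ ^ 2 :=
      Real.sq_sqrt (tsum_nonneg fun p => by positivity)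
    have h11 : (Real.sqrt (A * C) * ‖z‖) ^ 2 = A * C * ‖z‖ ^ 2 := by
      rw [mul_pow, Real.sq_sqrt (by positivity)]
    linarith
  intro z
  exact ⟨hsummable z, hlower z, hupper z⟩
end

section
/- Let H, K be Hilbert spaces and {Tᵢ}, {Lⱼ} operator frames on H and K with frame operators S_T and S_L respectively. Then the frame operator of the tensor product frame {Tᵢ ⊗ Lⱼ} on H ⊗ K is S_T ⊗ S_L. -/
set_option maxHeartbeats 1000000

open scoped InnerProductSpace
open ContinuousLinearMap

section Aux

variable {H : Type*} [NormedAddCommGroup H] [InnerProductSpace ℂ H]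
variable {K : Type*} [NormedAddCommGroup K] [InnerProductSpace ℂ K]
variable {E : Type*} [NormedAddCommGroup E] [InnerProductSpace ℂ E]

/-- Every element of the span of elementary tensors can be written with an orthonormal
family in the second slot. -/
lemma ortho_rep (tm : H →ₗ[ℂ] K →ₗ[ℂ] E) (w : E)
    (hw : w ∈ Submodule.span ℂ (Set.range fun p : H × K => tm p.1 p.2)) :
    ∃ (n : ℕ) (x : Fin n → H) (f : Fin n → K),
      Orthonormal ℂ f ∧ w = ∑ k, tm (x k) (f k) := by
  classical
  obtain ⟨n, c, g, hg⟩ := Submodule.mem_span_set'.1 hw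
  have hpick : ∀ k : Fin n, ∃ p : H × K, tm p.1 p.2 = (g k : E) := fun k => (g k).2
  choose p hp using hpick
  set u : Fin n → H := fun k => c k • (p k).1 with hu
  set v : Fin n → K := fun k => (p k).2 with hv
  have hw' : w = ∑ k, tm (u k) (v k) := by
    rw [← hg]
    refine Finset.sum_congr rfl fun k _ => ?_
    rw [hu, hv]
    simp only [map_smul, LinearMap.smul_apply, hp k]
  -- orthonormal basis of the span of the v's
  set V := Submodule.span ℂ (Set.range v) with hV
  haveI : FiniteDimensional ℂ V := FiniteDimensional.span_of_finite ℂ (Set.finite_range v)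
  set b := stdOrthonormalBasis ℂ V with hb
  set m := Module.finrank ℂ V
  refine ⟨m, fun i => ∑ k, (b.repr ⟨v k, Submodule.subset_span (Set.mem_range_self k)⟩ i) • u k,
    fun i => (b i : K), ?_, ?_⟩
  · rw [orthonormal_iff_ite]
    intro i j
    have := orthonormal_iff_ite.mp b.orthonormal i j
    rwa [Submodule.coe_inner] at this
  · have hvk : ∀ k, v k = ∑ i, (b.repr ⟨v k, Submodule.subset_span (Set.mem_range_self k)⟩ i)
        • (b i : K) := by
      intro k
      have := congrArg (Subtype.val) (b.sum_repr ⟨v k, Submodule.subset_span (Set.mem_range_self k)⟩)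
      simpa using this.symm
    rw [hw']
    calc ∑ k, tm (u k) (v k)
        = ∑ k, ∑ i, (b.repr ⟨v k, Submodule.subset_span (Set.mem_range_self k)⟩ i)
            • tm (u k) (b i : K) := by
          refine Finset.sum_congr rfl fun k _ => ?_
          conv_lhs => rw [hvk k]
          rw [map_sum]
          exact Finset.sum_congr rfl fun i _ => by rw [map_smul]
      _ = ∑ i, ∑ k, (b.repr ⟨v k, Submodule.subset_span (Set.mem_range_self k)⟩ i)
            • tm (u k) (b i : K) := Finset.sum_comm
      _ = ∑ i, tm (∑ k, (b.repr ⟨v k, Submodule.subset_span (Set.mem_range_self k)⟩ i) • u k)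
            (b i : K) := by
          refine Finset.sum_congr rfl fun i _ => ?_
          rw [map_sum, LinearMap.sum_apply]
          refine Finset.sum_congr rfl fun k _ => ?_
          simp [hu, map_smul, LinearMap.smul_apply]

/-- Norm of a sum of elementary tensors with orthonormal second factors. -/
lemma norm_sq_sum (tm : H →ₗ[ℂ] K →ₗ[ℂ] E)
    (htm : ∀ (ξ ξ' : H) (η η' : K),
      ⟪tm ξ η, tm ξ' η'⟫_ℂ = ⟪ξ, ξ'⟫_ℂ * ⟪η, η'⟫_ℂ)
    {n : ℕ} (x : Fin n → H) {f : Fin n → K} (hf : Orthonormal ℂ f) :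
    ‖∑ k, tm (x k) (f k)‖ ^ 2 = ∑ k, ‖x k‖ ^ 2 := by
  classical
  have h1 : ⟪∑ k, tm (x k) (f k), ∑ k, tm (x k) (f k)⟫_ℂ = ∑ k, ((‖x k‖ : ℂ)) ^ 2 := by
    rw [inner_sum]
    refine Finset.sum_congr rfl fun l _ => ?_
    rw [sum_inner]
    have : ∀ k, ⟪tm (x k) (f k), tm (x l) (f l)⟫_ℂ
        = ⟪x k, x l⟫_ℂ * (if k = l then (1:ℂ) else 0) := by
      intro k
      rw [htm, orthonormal_iff_ite.mp hf]
    simp_rw [this, mul_ite, mul_one, mul_zero]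
    simp [Finset.sum_ite_eq', inner_self_eq_norm_sq_to_K]
  have h2 := inner_self_eq_norm_sq_to_K (𝕜 := ℂ) (∑ k, tm (x k) (f k))
  rw [h2] at h1
  have h3 : ((‖∑ k, tm (x k) (f k)‖ ^ 2 : ℝ) : ℂ) = ((∑ k, ‖x k‖ ^ 2 : ℝ) : ℂ) := by
    push_cast
    exact h1
  exact_mod_cast h3

lemma inner_zero_of_dense {s : Set E} (hd : Dense s) {d : E}
    (h : ∀ w ∈ s, ⟪w, d⟫_ℂ = 0) : d = 0 := by
  have hc : Continuous fun w : E => ⟪w, d⟫_ℂ := continuous_id.inner continuous_const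
  have := Continuous.ext_on hd hc continuous_const h
  have hd0 : ⟪d, d⟫_ℂ = 0 := congrFun this d
  exact inner_self_eq_zero.mp hd0

end Aux

section Aux2

variable {H : Type*} [NormedAddCommGroup H] [InnerProductSpace ℂ H]
variable {K : Type*} [NormedAddCommGroup K] [InnerProductSpace ℂ K] [CompleteSpace K]
variable {E : Type*} [NormedAddCommGroup E] [InnerProductSpace ℂ E]

/-- `1 ⊗ Lop` is well defined on finite sums of elementary tensors. -/
lemma tensor_right_welldef (tm : H →ₗ[ℂ] K →ₗ[ℂ] E)
    (htm : ∀ (ξ ξ' : H) (η η' : K),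
      ⟪tm ξ η, tm ξ' η'⟫_ℂ = ⟪ξ, ξ'⟫_ℂ * ⟪η, η'⟫_ℂ)
    (hdense : Dense (Submodule.span ℂ (Set.range fun p : H × K => tm p.1 p.2) : Set E))
    (Lop : K →L[ℂ] K) {n m : ℕ} (a : Fin n → H) (b : Fin n → K)
    (a' : Fin m → H) (b' : Fin m → K)
    (h : ∑ k, tm (a k) (b k) = ∑ k, tm (a' k) (b' k)) :
    ∑ k, tm (a k) (Lop (b k)) = ∑ k, tm (a' k) (Lop (b' k)) := by
  set d := (∑ k, tm (a k) (Lop (b k))) - ∑ k, tm (a' k) (Lop (b' k)) with hd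
  have key : ∀ w ∈ (Submodule.span ℂ (Set.range fun p : H × K => tm p.1 p.2) : Set E),
      ⟪w, d⟫_ℂ = 0 := by
    intro w hw
    rw [SetLike.mem_coe] at hw
    induction hw using Submodule.span_induction with
    | mem w hwmem =>
      obtain ⟨⟨u, v⟩, rfl⟩ := hwmem
      have expand : ∀ (N : ℕ) (aa : Fin N → H) (bb : Fin N → K),
          ⟪tm u v, ∑ k, tm (aa k) (Lop (bb k))⟫_ℂ
            = ⟪tm u (adjoint Lop v), ∑ k, tm (aa k) (bb k)⟫_ℂ := by
        intro N aa bb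
        rw [inner_sum, inner_sum]
        refine Finset.sum_congr rfl fun k _ => ?_
        rw [htm, htm]
        congr 1
        rw [adjoint_inner_left]
      rw [hd, inner_sub_right, expand, expand, h, sub_self]
    | zero => simp
    | add x y hx hy ihx ihy => rw [inner_add_left, ihx, ihy, add_zero]
    | smul c x hx ihx => rw [inner_smul_left, ihx, mul_zero]
  have hd0 : d = 0 := by
    have hc : Continuous fun w : E => ⟪w, d⟫_ℂ := continuous_id.inner continuous_const
    have := Continuous.ext_on hdense hc continuous_const key
    exact inner_self_eq_zero.mp (congrFun this d)
  exact sub_eq_zero.mp hd0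

/-- Summability of `∑ N_p* N_p z` from a uniform Bessel-type bound. -/
lemma frame_summable {E' ι : Type*} [NormedAddCommGroup E'] [InnerProductSpace ℂ E']
    [CompleteSpace E'] (N : ι → E' →L[ℂ] E') (Cb : ℝ) (hCb : 0 ≤ Cb)
    (hbound : ∀ (w : E') (F : Finset ι), ∑ p ∈ F, ‖N p w‖ ^ 2 ≤ Cb * ‖w‖ ^ 2) (z : E') :
    Summable fun p => adjoint (N p) (N p z) := by
  classical
  rw [summable_iff_vanishing_norm]
  intro ε hε
  have hsq : Summable fun p => ‖N p z‖ ^ 2 :=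
    summable_of_sum_le (fun p => sq_nonneg _) (fun F => hbound z F)
  obtain ⟨s, hs⟩ := summable_iff_vanishing_norm.1 hsq (ε ^ 2 / (Cb + 1)) (by positivity)
  refine ⟨s, fun t ht => ?_⟩
  set v := ∑ p ∈ t, adjoint (N p) (N p z) with hv
  by_cases hv0 : v = 0
  · rw [hv0]; simpa using hε
  -- tail bound for the scalar series
  have htail : ∑ p ∈ t, ‖N p z‖ ^ 2 ≤ ε ^ 2 / (Cb + 1) := by
    have := hs t ht
    rw [Real.norm_eq_abs, abs_of_nonneg (Finset.sum_nonneg fun p _ => sq_nonneg _)] at this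
    exact this.le
  -- ‖v‖² ≤ √(tail) √(Cb) ‖v‖  via Cauchy-Schwarz
  have h1 : ‖v‖ ^ 2 ≤ ∑ p ∈ t, ‖N p z‖ * ‖N p v‖ := by
    have : (‖v‖ : ℝ) ^ 2 = RCLike.re (⟪v, v⟫_ℂ) := (inner_self_eq_norm_sq (𝕜 := ℂ) v).symm
    rw [this, hv, sum_inner, map_sum]
    refine Finset.sum_le_sum fun p _ => ?_
    rw [adjoint_inner_left]
    exact (re_inner_le_norm (𝕜 := ℂ) _ _)
  have h2 : (∑ p ∈ t, ‖N p z‖ * ‖N p v‖) ^ 2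
      ≤ (∑ p ∈ t, ‖N p z‖ ^ 2) * ∑ p ∈ t, ‖N p v‖ ^ 2 :=
    Finset.sum_mul_sq_le_sq_mul_sq t _ _
  have h3 : (∑ p ∈ t, ‖N p z‖ ^ 2) * ∑ p ∈ t, ‖N p v‖ ^ 2
      ≤ (ε ^ 2 / (Cb + 1)) * (Cb * ‖v‖ ^ 2) :=
    mul_le_mul htail (hbound v t) (Finset.sum_nonneg fun p _ => sq_nonneg _) (by positivity)
  have hvpos : 0 < ‖v‖ ^ 2 := by
    have := norm_pos_iff.mpr hv0
    positivity
  have h4 : ‖v‖ ^ 2 * ‖v‖ ^ 2 ≤ (ε ^ 2 / (Cb + 1)) * Cb * ‖v‖ ^ 2 := by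
    calc ‖v‖ ^ 2 * ‖v‖ ^ 2 ≤ (∑ p ∈ t, ‖N p z‖ * ‖N p v‖) ^ 2 := by
          rw [← pow_two]
          exact pow_le_pow_left₀ (sq_nonneg _) h1 2
      _ ≤ (∑ p ∈ t, ‖N p z‖ ^ 2) * ∑ p ∈ t, ‖N p v‖ ^ 2 := h2
      _ ≤ (ε ^ 2 / (Cb + 1)) * Cb * ‖v‖ ^ 2 := by rw [mul_assoc]; exact h3
  have h5 : ‖v‖ ^ 2 ≤ ε ^ 2 / (Cb + 1) * Cb := le_of_mul_le_mul_right (by linarith) hvpos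
  have h6 : ‖v‖ ^ 2 < ε ^ 2 := by
    have : ε ^ 2 / (Cb + 1) * Cb < ε ^ 2 := by
      rw [div_mul_eq_mul_div, div_lt_iff₀ (by linarith)]
      nlinarith [sq_nonneg ε, hε]
    linarith
  exact lt_of_pow_lt_pow_left₀ 2 hε.le h6

end Aux2


variable {H : Type*} [NormedAddCommGroup H] [InnerProductSpace ℂ H] [CompleteSpace H]

variable {K : Type*} [NormedAddCommGroup K] [InnerProductSpace ℂ K] [CompleteSpace K]
variable {E : Type*} [NormedAddCommGroup E] [InnerProductSpace ℂ E] [CompleteSpace E]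
variable {I J : Type*} [Countable I] [Countable J]

/-- The frame operator of a tensor product frame is the tensor product of the frame
operators, stated via an abstract realization `tmul` of the Hilbert tensor product:
on elementary tensors (whose span is dense), the frame operator of `{Tᵢ ⊗ Lⱼ}` acts as
`S_T ⊗ S_L`. -/
theorem tensor_frame_operator (tmul : H →ₗ[ℂ] K →ₗ[ℂ] E)
    (htmul : ∀ (ξ ξ' : H) (η η' : K),
      ⟪tmul ξ η, tmul ξ' η'⟫_ℂ = ⟪ξ, ξ'⟫_ℂ * ⟪η, η'⟫_ℂ)
    (hdense :
      Dense (Submodule.span ℂ (Set.range fun p : H × K => tmul p.1 p.2) : Set E))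
    (T : I → H →L[ℂ] H) (L : J → K →L[ℂ] K) (A B C D : ℝ)
    (hA : 0 < A) (hB : 0 < B) (hC : 0 < C) (hD : 0 < D)
    (hsumT : ∀ ξ : H, Summable fun i => ‖T i ξ‖ ^ 2)
    (hlowT : ∀ ξ : H, A * ‖ξ‖ ^ 2 ≤ ∑' i, ‖T i ξ‖ ^ 2)
    (hupT : ∀ ξ : H, ∑' i, ‖T i ξ‖ ^ 2 ≤ B * ‖ξ‖ ^ 2)
    (hsumL : ∀ η : K, Summable fun j => ‖L j η‖ ^ 2)
    (hlowL : ∀ η : K, C * ‖η‖ ^ 2 ≤ ∑' j, ‖L j η‖ ^ 2)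
    (hupL : ∀ η : K, ∑' j, ‖L j η‖ ^ 2 ≤ D * ‖η‖ ^ 2)
    (M : I × J → E →L[ℂ] E)
    (hM : ∀ (i : I) (j : J) (ξ : H) (η : K),
      M (i, j) (tmul ξ η) = tmul (T i ξ) (L j η))
    (ST : H →L[ℂ] H) (hST : ∀ ξ : H, ST ξ = ∑' i, adjoint (T i) (T i ξ))
    (SL : K →L[ℂ] K) (hSL : ∀ η : K, SL η = ∑' j, adjoint (L j) (L j η))
    (S : E →L[ℂ] E) (hS : ∀ z : E, S z = ∑' p : I × J, adjoint (M p) (M p z)) :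
    ∀ (ξ : H) (η : K), S (tmul ξ η) = tmul (ST ξ) (SL η) := by
  classical
  have hrange : (Set.range fun p : K × H => (LinearMap.flip tmul) p.1 p.2)
      = Set.range fun p : H × K => tmul p.1 p.2 := by
    ext z
    constructor
    · rintro ⟨⟨b, a⟩, rfl⟩; exact ⟨(a, b), rfl⟩
    · rintro ⟨⟨a, b⟩, rfl⟩; exact ⟨(b, a), rfl⟩
  have htmul' : ∀ (η η' : K) (ξ ξ' : H),
      ⟪(LinearMap.flip tmul) η ξ, (LinearMap.flip tmul) η' ξ'⟫_ℂ
        = ⟪η, η'⟫_ℂ * ⟪ξ, ξ'⟫_ℂ := by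
    intro η η' ξ ξ'
    rw [LinearMap.flip_apply, LinearMap.flip_apply, htmul, mul_comm]
  have hTbound : ∀ (x : H) (F : Finset I), ∑ i ∈ F, ‖T i x‖ ^ 2 ≤ B * ‖x‖ ^ 2 :=
    fun x F => le_trans (Summable.sum_le_tsum F (fun _ _ => sq_nonneg _) (hsumT x)) (hupT x)
  have hLbound : ∀ (y : K) (F : Finset J), ∑ j ∈ F, ‖L j y‖ ^ 2 ≤ D * ‖y‖ ^ 2 :=
    fun y F => le_trans (Summable.sum_le_tsum F (fun _ _ => sq_nonneg _) (hsumL y)) (hupL y)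
  -- Bessel-type bound for the tensor family, first on the span of elementary tensors
  have lemA0 : ∀ (F : Finset (I × J)),
      ∀ w ∈ (Submodule.span ℂ (Set.range fun p : H × K => tmul p.1 p.2) : Set E),
      ∑ p ∈ F, ‖M p w‖ ^ 2 ≤ (B * D) * ‖w‖ ^ 2 := by
    intro F w hw
    rw [SetLike.mem_coe] at hw
    obtain ⟨n, x, f, hf, rfl⟩ := ortho_rep tmul w hw
    set F1 := F.image Prod.fst with hF1
    set F2 := F.image Prod.snd with hF2
    have hsub : F ⊆ F1 ×ˢ F2 := by
      intro p hp
      rw [Finset.mem_product]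
      exact ⟨Finset.mem_image_of_mem _ hp, Finset.mem_image_of_mem _ hp⟩
    have inner_bd : ∀ i : I, ∑ j ∈ F2, ‖M (i, j) (∑ k, tmul (x k) (f k))‖ ^ 2
        ≤ D * ∑ k, ‖T i (x k)‖ ^ 2 := by
      intro i
      have hwi_mem : (∑ k, tmul (T i (x k)) (f k)) ∈
          Submodule.span ℂ (Set.range fun p : H × K => tmul p.1 p.2) :=
        Submodule.sum_mem _ fun k _ => Submodule.subset_span ⟨(T i (x k), f k), rfl⟩
      obtain ⟨m, vv, e, he, hrep⟩ := ortho_rep (LinearMap.flip tmul)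
        (∑ k, tmul (T i (x k)) (f k)) (by rw [hrange]; exact hwi_mem)
      have hrep' : ∑ k, tmul (T i (x k)) (f k) = ∑ r, tmul (e r) (vv r) := by
        simpa [LinearMap.flip_apply] using hrep
      have hwd : ∀ j : J,
          ∑ k, tmul (T i (x k)) (L j (f k)) = ∑ r, tmul (e r) (L j (vv r)) :=
        fun j => tensor_right_welldef tmul htmul hdense (L j) _ f e vv hrep'
      have hMw : ∀ j : J,
          M (i, j) (∑ k, tmul (x k) (f k)) = ∑ k, tmul (T i (x k)) (L j (f k)) := by
        intro j
        rw [map_sum]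
        exact Finset.sum_congr rfl fun k _ => hM i j (x k) (f k)
      calc ∑ j ∈ F2, ‖M (i, j) (∑ k, tmul (x k) (f k))‖ ^ 2
          = ∑ j ∈ F2, ∑ r, ‖L j (vv r)‖ ^ 2 := by
            refine Finset.sum_congr rfl fun j _ => ?_
            rw [hMw j, hwd j]
            have h := norm_sq_sum (LinearMap.flip tmul) htmul' (fun r => L j (vv r)) he
            simpa [LinearMap.flip_apply] using h
        _ = ∑ r, ∑ j ∈ F2, ‖L j (vv r)‖ ^ 2 := Finset.sum_comm
        _ ≤ ∑ r, D * ‖vv r‖ ^ 2 := Finset.sum_le_sum fun r _ => hLbound (vv r) F2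
        _ = D * ∑ r, ‖vv r‖ ^ 2 := by rw [Finset.mul_sum]
        _ = D * ‖∑ r, tmul (e r) (vv r)‖ ^ 2 := by
            have h := norm_sq_sum (LinearMap.flip tmul) htmul' vv he
            rw [show (∑ r, ‖vv r‖ ^ 2) = ‖∑ r, tmul (e r) (vv r)‖ ^ 2 from by
              simpa [LinearMap.flip_apply] using h.symm]
        _ = D * ‖∑ k, tmul (T i (x k)) (f k)‖ ^ 2 := by rw [hrep']
        _ = D * ∑ k, ‖T i (x k)‖ ^ 2 := by
            rw [norm_sq_sum tmul htmul (fun k => T i (x k)) hf]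
    calc ∑ p ∈ F, ‖M p (∑ k, tmul (x k) (f k))‖ ^ 2
        ≤ ∑ p ∈ F1 ×ˢ F2, ‖M p (∑ k, tmul (x k) (f k))‖ ^ 2 :=
          Finset.sum_le_sum_of_subset_of_nonneg hsub (fun _ _ _ => sq_nonneg _)
      _ = ∑ i ∈ F1, ∑ j ∈ F2, ‖M (i, j) (∑ k, tmul (x k) (f k))‖ ^ 2 := by
          rw [Finset.sum_product]
      _ ≤ ∑ i ∈ F1, D * ∑ k, ‖T i (x k)‖ ^ 2 :=
          Finset.sum_le_sum fun i _ => inner_bd i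
      _ = D * ∑ k, ∑ i ∈ F1, ‖T i (x k)‖ ^ 2 := by
          rw [← Finset.mul_sum]
          congr 1
          exact Finset.sum_comm
      _ ≤ D * ∑ k, B * ‖x k‖ ^ 2 := by
          refine mul_le_mul_of_nonneg_left ?_ hD.le
          exact Finset.sum_le_sum fun k _ => hTbound (x k) F1
      _ = (B * D) * ∑ k, ‖x k‖ ^ 2 := by
          rw [← Finset.mul_sum]
          ring
      _ = (B * D) * ‖∑ k, tmul (x k) (f k)‖ ^ 2 := by
          rw [norm_sq_sum tmul htmul x hf]
  -- extend the bound to all of E by density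
  have lemA : ∀ (F : Finset (I × J)) (w : E),
      ∑ p ∈ F, ‖M p w‖ ^ 2 ≤ (B * D) * ‖w‖ ^ 2 := by
    intro F w
    have hcl : IsClosed {w : E | ∑ p ∈ F, ‖M p w‖ ^ 2 ≤ (B * D) * ‖w‖ ^ 2} := by
      apply isClosed_le
      · exact continuous_finset_sum _ fun p _ => ((M p).continuous.norm).pow 2
      · exact continuous_const.mul (continuous_norm.pow 2)
    have hsubset : closure
        (Submodule.span ℂ (Set.range fun p : H × K => tmul p.1 p.2) : Set E)
        ⊆ {w : E | ∑ p ∈ F, ‖M p w‖ ^ 2 ≤ (B * D) * ‖w‖ ^ 2} :=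
      closure_minimal (lemA0 F) hcl
    rw [hdense.closure_eq] at hsubset
    exact hsubset (Set.mem_univ w)
  -- summability statements
  have hMsum : ∀ z : E, Summable fun p : I × J => adjoint (M p) (M p z) :=
    fun z => frame_summable M (B * D) (by positivity) (fun w F => lemA F w) z
  have hTsum : ∀ x : H, Summable fun i => adjoint (T i) (T i x) :=
    fun x => frame_summable T B hB.le (fun w F => hTbound w F) x
  have hLsum : ∀ y : K, Summable fun j => adjoint (L j) (L j y) :=
    fun y => frame_summable L D hD.le (fun w F => hLbound w F) y
  -- final assembly
  intro ξ η
  have key : ∀ w ∈ (Submodule.span ℂ (Set.range fun p : H × K => tmul p.1 p.2) : Set E),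
      ⟪w, S (tmul ξ η) - tmul (ST ξ) (SL η)⟫_ℂ = 0 := by
    intro w hw
    rw [SetLike.mem_coe] at hw
    induction hw using Submodule.span_induction with
    | mem w hwmem =>
      obtain ⟨⟨u, v⟩, rfl⟩ := hwmem
      rw [inner_sub_right, sub_eq_zero]
      have hgT : Summable fun i => ⟪u, adjoint (T i) (T i ξ)⟫_ℂ :=
        (hTsum ξ).mapL (innerSL ℂ u)
      have hgL : Summable fun j => ⟪v, adjoint (L j) (L j η)⟫_ℂ :=
        (hLsum η).mapL (innerSL ℂ v)
      calc ⟪tmul u v, S (tmul ξ η)⟫_ℂ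
          = ⟪tmul u v, ∑' p : I × J, adjoint (M p) (M p (tmul ξ η))⟫_ℂ := by rw [hS]
        _ = ∑' p : I × J, ⟪tmul u v, adjoint (M p) (M p (tmul ξ η))⟫_ℂ := by
            have h := (innerSL ℂ (tmul u v)).map_tsum (hMsum (tmul ξ η))
            simpa using h
        _ = ∑' p : I × J,
            (⟪u, adjoint (T p.1) (T p.1 ξ)⟫_ℂ * ⟪v, adjoint (L p.2) (L p.2 η)⟫_ℂ) := by
            refine tsum_congr fun p => ?_
            obtain ⟨i, j⟩ := p
            rw [adjoint_inner_right, hM i j ξ η, hM i j u v, htmul,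
              adjoint_inner_right, adjoint_inner_right]
        _ = (∑' i, ⟪u, adjoint (T i) (T i ξ)⟫_ℂ)
              * (∑' j, ⟪v, adjoint (L j) (L j η)⟫_ℂ) :=
            (tsum_mul_tsum_of_summable_norm
              (summable_norm_iff.mpr hgT) (summable_norm_iff.mpr hgL)).symm
        _ = ⟪u, ST ξ⟫_ℂ * ⟪v, SL η⟫_ℂ := by
            rw [hST, hSL]
            have h1 := (innerSL ℂ u).map_tsum (hTsum ξ)
            have h2 := (innerSL ℂ v).map_tsum (hLsum η)
            simp only [innerSL_apply_apply] at h1 h2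
            rw [← h1, ← h2]
        _ = ⟪tmul u v, tmul (ST ξ) (SL η)⟫_ℂ := (htmul u (ST ξ) v (SL η)).symm
    | zero => simp
    | add x y hx hy ihx ihy => rw [inner_add_left, ihx, ihy, add_zero]
    | smul c x hx ihx => rw [inner_smul_left, ihx, mul_zero]
  exact sub_eq_zero.mp (inner_zero_of_dense hdense key)
end
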